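/- Fix all coefficient blocks except (β_{jk}, β_{kj}) for a given pair j ≠ k. Define the partial residuals r_{jk} = x_j − Σ_{l≠j,k} Ψ_{jl} β_{jl} and r_{kj} = x_k − Σ_{l≠k,j} Ψ_{kl} β_{kl}, and the least-squares fits b_{jk} = (Ψ_{jk}ᵀΨ_{jk})^{-1} Ψ_{jk}ᵀ r_{jk} and b_{kj} = (Ψ_{kj}ᵀΨ_{kj})^{-1} Ψ_{kj}ᵀ r_{kj}. If (b_{jk}, b_{kj}) ≠ (0,0), then the unique minimizer of F over (β_{jk}, β_{kj}) with all other blocks held fixed is given by the group soft-thresholding update β̂_{jk} = (1 − nλ / (‖Ψ_{jk} b_{jk}‖₂² + ‖Ψ_{kj} b_{kj}‖₂²)^{1/2})_+ · b_{jk} and β̂_{kj} = (1 − nλ / (‖Ψ_{jk} b_{jk}‖₂² + ‖Ψ_{kj} b_{kj}‖₂²)^{1/2})_+ · b_{kj}, where (u)_+ = max(u, 0); if (b_{jk}, b_{kj}) = (0,0), the unique minimizer is (0,0). -/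

import Mathlib

/-!
With all other blocks fixed, the objective depends on the pair `(β_{jk}, β_{kj})` only through
the fitting terms of rows `j` and `k` and a single penalty term. Because `Ψᵀ Ψ = n I`,
Pythagoras for least squares turns the two fitting terms, with their factor `1 / (2n)`, into
`½ ‖b - w‖²` plus a constant, and the penalty into `√n λ ‖w‖`, where `w` and `b` stack the two
blocks and the two least-squares fits. So the block update is the proximal map of `μ ‖·‖` at `b`
with `μ = √n λ`. By Cauchy–Schwarz, `½ ‖b - w‖² + μ ‖w‖` is bounded below by a quadratic in
`‖w‖` alone, minimised at `‖w‖ = (‖b‖ - μ)₊`, with equality only when `w` is a nonnegative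
multiple of `b`: this is group soft-thresholding.
-/

open Matrix
open scoped Classical

noncomputable def sqNorm {n : ℕ} (v : Fin n → ℝ) : ℝ := ∑ i, v i ^ 2

/-- The SpaCE JAM objective
F(β) = (1/(2n)) Σ_j ‖x_j − Σ_{k≠j} Ψ_{jk}β_{jk}‖₂²
       + λ Σ_{k>j} (‖Ψ_{jk}β_{jk}‖₂² + ‖Ψ_{kj}β_{kj}‖₂²)^{1/2}. -/
noncomputable def spaceJamObj (n r d : ℕ) (lam : ℝ)
    (x : Fin d → Fin n → ℝ)
    (Ψ : Fin d → Fin d → Matrix (Fin n) (Fin r) ℝ)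
    (β : Fin d → Fin d → Fin r → ℝ) : ℝ :=
  (1 / (2 * (n : ℝ))) * ∑ j, sqNorm (fun i =>
      x j i - ∑ k ∈ Finset.univ.filter (fun k => k ≠ j), (Ψ j k).mulVec (β j k) i)
  + lam * ∑ p ∈ Finset.univ.filter (fun p : Fin d × Fin d => p.1 < p.2),
      Real.sqrt (sqNorm ((Ψ p.1 p.2).mulVec (β p.1 p.2))
        + sqNorm ((Ψ p.2 p.1).mulVec (β p.2 p.1)))

def updPair {r d : ℕ} (β : Fin d → Fin d → Fin r → ℝ) (j k : Fin d)
    (u v : Fin r → ℝ) : Fin d → Fin d → Fin r → ℝ :=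
  fun a b => if a = j ∧ b = k then u else if a = k ∧ b = j then v else β a b

open scoped RealInnerProductSpace

lemma half_sq_sub_mul_max_le (a t : ℝ) (ht : 0 ≤ t) :
    1 / 2 * max a 0 ^ 2 - a * max a 0 + 1 / 2 * (t - max a 0) ^ 2 ≤ 1 / 2 * t ^ 2 - a * t := by
  rcases le_total a 0 with ha | ha
  · rw [max_eq_right ha]; nlinarith
  · rw [max_eq_left ha]; nlinarith

section GroupSoftThreshold

variable {E : Type*} [NormedAddCommGroup E] [InnerProductSpace ℝ E] {μ : ℝ}

noncomputable def groupSoftThreshold (μ : ℝ) (b : E) : E := max (1 - μ / ‖b‖) 0 • b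

lemma norm_groupSoftThreshold (hμ : 0 ≤ μ) (b : E) :
    ‖groupSoftThreshold μ b‖ = max (‖b‖ - μ) 0 := by
  rw [groupSoftThreshold, norm_smul, Real.norm_of_nonneg (le_max_right _ _),
    max_mul_of_nonneg _ _ (norm_nonneg b), zero_mul]
  rcases eq_or_ne ‖b‖ 0 with hb | hb
  · simp [hb, hμ]
  · rw [sub_mul, one_mul, div_mul_cancel₀ _ hb]

lemma inner_groupSoftThreshold (b : E) :
    ⟪b, groupSoftThreshold μ b⟫ = ‖b‖ * ‖groupSoftThreshold μ b‖ := by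
  have hc : 0 ≤ max (1 - μ / ‖b‖) 0 := le_max_right _ _
  rw [groupSoftThreshold, real_inner_smul_right, real_inner_self_eq_norm_sq, norm_smul,
    Real.norm_of_nonneg hc]
  ring

/-- The excess of the objective over its value at the soft-thresholded point controls both the
radial and the angular distance of `w` from it. -/
lemma groupSoftThreshold_add_le (hμ : 0 ≤ μ) (b w : E) :
    1 / 2 * ‖b - groupSoftThreshold μ b‖ ^ 2 + μ * ‖groupSoftThreshold μ b‖
      + (1 / 2 * (‖w‖ - ‖groupSoftThreshold μ b‖) ^ 2 + (‖b‖ * ‖w‖ - ⟪b, w⟫))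
      ≤ 1 / 2 * ‖b - w‖ ^ 2 + μ * ‖w‖ := by
  have key := half_sq_sub_mul_max_le (‖b‖ - μ) ‖w‖ (norm_nonneg w)
  rw [norm_sub_sq_real, norm_sub_sq_real, inner_groupSoftThreshold,
    norm_groupSoftThreshold hμ]
  linarith

lemma groupSoftThreshold_le (hμ : 0 ≤ μ) (b w : E) :
    1 / 2 * ‖b - groupSoftThreshold μ b‖ ^ 2 + μ * ‖groupSoftThreshold μ b‖
      ≤ 1 / 2 * ‖b - w‖ ^ 2 + μ * ‖w‖ := by
  have := groupSoftThreshold_add_le hμ b w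
  nlinarith [real_inner_le_norm b w]

lemma eq_groupSoftThreshold_of_le (hμ : 0 ≤ μ) {b w : E}
    (h : 1 / 2 * ‖b - w‖ ^ 2 + μ * ‖w‖
      ≤ 1 / 2 * ‖b - groupSoftThreshold μ b‖ ^ 2 + μ * ‖groupSoftThreshold μ b‖) :
    w = groupSoftThreshold μ b := by
  have key := groupSoftThreshold_add_le hμ b w
  have hcs := real_inner_le_norm b w
  have hsq := sq_nonneg (‖w‖ - ‖groupSoftThreshold μ b‖)
  have hnorm : ‖w‖ = ‖groupSoftThreshold μ b‖ := by nlinarith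
  have hinner : ⟪b, w⟫ = ‖b‖ * ‖w‖ := by nlinarith
  have hcross : ⟪w, groupSoftThreshold μ b⟫ = ‖groupSoftThreshold μ b‖ * ‖w‖ := by
    have hc : 0 ≤ max (1 - μ / ‖b‖) 0 := le_max_right _ _
    rw [groupSoftThreshold, real_inner_smul_right, real_inner_comm, hinner, norm_smul,
      Real.norm_of_nonneg hc]
    ring
  have hdist : ‖w - groupSoftThreshold μ b‖ ^ 2 = 0 := by
    rw [norm_sub_sq_real, hcross, hnorm]
    ring
  simpa [sub_eq_zero] using hdist

end GroupSoftThreshold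

lemma sqNorm_eq_dotProduct {n : ℕ} (v : Fin n → ℝ) : sqNorm v = v ⬝ᵥ v := by
  simp only [sqNorm, dotProduct, sq]

section LeastSquares

variable {n r : ℕ} (Ψ : Matrix (Fin n) (Fin r) ℝ)

/-- Pythagoras for least squares: the residual of a solution of the normal equations is
orthogonal to the column space of `Ψ`. -/
lemma sqNorm_sub_mulVec_of_normal_eq {y : Fin n → ℝ} {b : Fin r → ℝ}
    (hb : (Ψᵀ * Ψ) *ᵥ b = Ψᵀ *ᵥ y) (u : Fin r → ℝ) :
    sqNorm (y - Ψ *ᵥ u) = sqNorm (y - Ψ *ᵥ b) + sqNorm (Ψ *ᵥ (b - u)) := by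
  have horth : (y - Ψ *ᵥ b) ⬝ᵥ Ψ *ᵥ (b - u) = 0 := by
    rw [dotProduct_mulVec, ← mulVec_transpose, mulVec_sub, mulVec_mulVec, hb, sub_self,
      zero_dotProduct]
  have hsplit : y - Ψ *ᵥ u = (y - Ψ *ᵥ b) + Ψ *ᵥ (b - u) := by
    rw [mulVec_sub]; abel
  rw [hsplit, sqNorm_eq_dotProduct, sqNorm_eq_dotProduct, sqNorm_eq_dotProduct,
    add_dotProduct, dotProduct_add, dotProduct_add, dotProduct_comm (Ψ *ᵥ (b - u)), horth]
  ring

noncomputable def leastSquaresFit (y : Fin n → ℝ) : Fin r → ℝ := (Ψᵀ * Ψ)⁻¹ *ᵥ (Ψᵀ *ᵥ y)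

lemma normal_eq_leastSquaresFit (h : IsUnit (Ψᵀ * Ψ).det) (y : Fin n → ℝ) :
    (Ψᵀ * Ψ) *ᵥ leastSquaresFit Ψ y = Ψᵀ *ᵥ y := by
  rw [leastSquaresFit, mulVec_mulVec, mul_nonsing_inv _ h, one_mulVec]

lemma sqNorm_mulVec_of_gram_eq {s : ℝ} (hΨ : Ψᵀ * Ψ = s • 1) (u : Fin r → ℝ) :
    sqNorm (Ψ *ᵥ u) = s * sqNorm u := by
  rw [sqNorm_eq_dotProduct, sqNorm_eq_dotProduct, dotProduct_mulVec, ← mulVec_transpose,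
    mulVec_mulVec, hΨ, smul_mulVec, one_mulVec, smul_dotProduct, smul_eq_mul]

lemma gram_eq_of_orthonormal (hn : 0 < n) (hΨ : (1 / (n : ℝ)) • (Ψᵀ * Ψ) = 1) :
    Ψᵀ * Ψ = (n : ℝ) • 1 := by
  rw [← hΨ, smul_smul, mul_one_div_cancel (by positivity), one_smul]

lemma isUnit_det_of_orthonormal (hΨ : (1 / (n : ℝ)) • (Ψᵀ * Ψ) = 1) :
    IsUnit (Ψᵀ * Ψ).det :=
  isUnit_det_of_left_inverse (B := (1 / (n : ℝ)) • 1) (by rwa [smul_one_mul])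

lemma sqNorm_sub_mulVec_of_orthonormal (hn : 0 < n) (hΨ : (1 / (n : ℝ)) • (Ψᵀ * Ψ) = 1)
    (y : Fin n → ℝ) (u : Fin r → ℝ) :
    sqNorm (y - Ψ *ᵥ u) = sqNorm (y - Ψ *ᵥ leastSquaresFit Ψ y)
      + n * sqNorm (leastSquaresFit Ψ y - u) := by
  rw [sqNorm_sub_mulVec_of_normal_eq Ψ
      (normal_eq_leastSquaresFit Ψ (isUnit_det_of_orthonormal Ψ hΨ) y),
    sqNorm_mulVec_of_gram_eq Ψ (gram_eq_of_orthonormal Ψ hn hΨ)]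

end LeastSquares

section PairVec

variable {r : ℕ}

noncomputable def pairVec (u v : Fin r → ℝ) : EuclideanSpace ℝ (Fin r ⊕ Fin r) :=
  WithLp.toLp 2 (Sum.elim u v)

lemma norm_pairVec_sq (u v : Fin r → ℝ) : ‖pairVec u v‖ ^ 2 = sqNorm u + sqNorm v := by
  simp [pairVec, EuclideanSpace.real_norm_sq_eq, Fintype.sum_sum_type, sqNorm]

lemma norm_pairVec (u v : Fin r → ℝ) : ‖pairVec u v‖ = √(sqNorm u + sqNorm v) := by
  rw [← norm_pairVec_sq, Real.sqrt_sq (norm_nonneg _)]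

lemma pairVec_sub (a b u v : Fin r → ℝ) :
    pairVec a b - pairVec u v = pairVec (a - u) (b - v) := by
  rw [pairVec, pairVec, pairVec, ← WithLp.toLp_sub, Sum.elim_sub_sub]

lemma smul_pairVec (c : ℝ) (u v : Fin r → ℝ) : c • pairVec u v = pairVec (c • u) (c • v) := by
  rw [pairVec, pairVec, ← WithLp.toLp_smul]
  congr 1
  ext (i | i) <;> rfl

lemma pairVec_injective {u v u' v' : Fin r → ℝ} (h : pairVec u v = pairVec u' v') :
    u = u' ∧ v = v' := by
  have h' := WithLp.toLp_injective 2 h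
  exact ⟨funext fun i => congrFun h' (.inl i), funext fun i => congrFun h' (.inr i)⟩

end PairVec

section Blocks

variable {n r d : ℕ} (x : Fin d → Fin n → ℝ) (Ψ : Fin d → Fin d → Matrix (Fin n) (Fin r) ℝ)
  (β : Fin d → Fin d → Fin r → ℝ) {j k : Fin d} {u v : Fin r → ℝ}

noncomputable def blockResidual (a : Fin d) : Fin n → ℝ :=
  fun i => x a i - ∑ l ∈ Finset.univ.filter (fun l => l ≠ a), (Ψ a l *ᵥ β a l) i

/-- The partial residual `r_{jk}` of the paper. -/
noncomputable def partialResidual (j k : Fin d) : Fin n → ℝ :=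
  fun i => x j i - ∑ l ∈ Finset.univ.filter (fun l => l ≠ j ∧ l ≠ k), (Ψ j l *ᵥ β j l) i

noncomputable def pairPenalty (a b : Fin d) : ℝ :=
  √(sqNorm (Ψ a b *ᵥ β a b) + sqNorm (Ψ b a *ᵥ β b a))

lemma spaceJamObj_eq (lam : ℝ) :
    spaceJamObj n r d lam x Ψ β = 1 / (2 * (n : ℝ)) * ∑ a, sqNorm (blockResidual x Ψ β a)
      + lam * ∑ p ∈ Finset.univ.filter (fun p : Fin d × Fin d => p.1 < p.2),
        pairPenalty Ψ β p.1 p.2 :=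
  rfl

lemma updPair_comm (hjk : j ≠ k) : updPair β j k u v = updPair β k j v u := by
  funext a b
  unfold updPair
  grind

lemma updPair_of_ne {a b : Fin d} (h₁ : ¬(a = j ∧ b = k)) (h₂ : ¬(a = k ∧ b = j)) :
    updPair β j k u v a b = β a b := by
  simp only [updPair, if_neg h₁, if_neg h₂]

lemma updPair_left : updPair β j k u v j k = u := if_pos ⟨rfl, rfl⟩

lemma updPair_right (hjk : j ≠ k) : updPair β j k u v k j = v := by
  rw [updPair_comm β hjk, updPair_left]

lemma blockResidual_updPair_of_ne {a : Fin d} (haj : a ≠ j) (hak : a ≠ k) :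
    blockResidual x Ψ (updPair β j k u v) a = blockResidual x Ψ β a := by
  unfold blockResidual
  simp only [updPair, haj, hak, false_and, if_false]

lemma blockResidual_updPair_left (hjk : j ≠ k) :
    blockResidual x Ψ (updPair β j k u v) j = partialResidual x Ψ β j k - Ψ j k *ᵥ u := by
  have hk : k ∈ Finset.univ.filter (fun l => l ≠ j) := by simpa using hjk.symm
  have herase : (Finset.univ.filter (fun l => l ≠ j)).erase k
      = Finset.univ.filter (fun l => l ≠ j ∧ l ≠ k) := by
    ext l; simp [and_comm]
  funext i
  simp only [blockResidual, partialResidual, Pi.sub_apply]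
  rw [← Finset.add_sum_erase _ _ hk, herase, updPair_left]
  have hrest : ∑ l ∈ Finset.univ.filter (fun l => l ≠ j ∧ l ≠ k),
      (Ψ j l *ᵥ updPair β j k u v j l) i = ∑ l ∈ Finset.univ.filter (fun l => l ≠ j ∧ l ≠ k),
      (Ψ j l *ᵥ β j l) i :=
    Finset.sum_congr rfl fun l hl => by
      rw [updPair_of_ne β (by grind) (by grind)]
  rw [hrest]
  ring

lemma blockResidual_updPair_right (hjk : j ≠ k) :
    blockResidual x Ψ (updPair β j k u v) k = partialResidual x Ψ β k j - Ψ k j *ᵥ v := by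
  rw [updPair_comm β hjk, blockResidual_updPair_left x Ψ β hjk.symm]

lemma pairPenalty_updPair_of_ne {a b : Fin d} (h₁ : ¬(a = j ∧ b = k)) (h₂ : ¬(a = k ∧ b = j)) :
    pairPenalty Ψ (updPair β j k u v) a b = pairPenalty Ψ β a b := by
  unfold pairPenalty
  rw [updPair_of_ne β h₁ h₂, updPair_of_ne β (by tauto) (by tauto)]

lemma pairPenalty_updPair (hjk : j ≠ k) :
    pairPenalty Ψ (updPair β j k u v) j k = √(sqNorm (Ψ j k *ᵥ u) + sqNorm (Ψ k j *ᵥ v)) := by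
  rw [pairPenalty, updPair_left, updPair_right β hjk]

lemma sum_sqNorm_blockResidual_updPair (hjk : j ≠ k) :
    ∑ a, sqNorm (blockResidual x Ψ (updPair β j k u v) a)
      = sqNorm (partialResidual x Ψ β j k - Ψ j k *ᵥ u)
        + sqNorm (partialResidual x Ψ β k j - Ψ k j *ᵥ v)
        + ∑ a ∈ (Finset.univ.erase j).erase k, sqNorm (blockResidual x Ψ β a) := by
  have hk : k ∈ Finset.univ.erase j := by simpa using hjk.symm
  rw [← Finset.add_sum_erase _ _ (Finset.mem_univ j), ← Finset.add_sum_erase _ _ hk,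
    blockResidual_updPair_left x Ψ β hjk, blockResidual_updPair_right x Ψ β hjk, ← add_assoc]
  congr 1
  refine Finset.sum_congr rfl fun a ha => ?_
  rw [blockResidual_updPair_of_ne x Ψ β (by grind) (by grind)]

lemma sum_pairPenalty_updPair (hjk : j < k) :
    ∑ p ∈ Finset.univ.filter (fun p : Fin d × Fin d => p.1 < p.2),
        pairPenalty Ψ (updPair β j k u v) p.1 p.2
      = √(sqNorm (Ψ j k *ᵥ u) + sqNorm (Ψ k j *ᵥ v))
        + ∑ p ∈ (Finset.univ.filter (fun p : Fin d × Fin d => p.1 < p.2)).erase (j, k),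
          pairPenalty Ψ β p.1 p.2 := by
  have hjk_mem : (j, k) ∈ Finset.univ.filter (fun p : Fin d × Fin d => p.1 < p.2) := by
    simpa using hjk
  rw [← Finset.add_sum_erase _ _ hjk_mem, pairPenalty_updPair Ψ β hjk.ne]
  congr 1
  refine Finset.sum_congr rfl fun p hp => ?_
  obtain ⟨hp_ne, hp_lt⟩ : p ≠ (j, k) ∧ p.1 < p.2 := by simpa using hp
  refine pairPenalty_updPair_of_ne Ψ β (fun h => hp_ne (Prod.ext h.1 h.2)) ?_
  rintro ⟨rfl, rfl⟩
  exact lt_asymm hjk hp_lt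

lemma spaceJamObj_updPair (lam : ℝ) (hjk : j ≠ k) :
    ∃ C, ∀ u v, spaceJamObj n r d lam x Ψ (updPair β j k u v)
      = C + 1 / (2 * (n : ℝ)) * (sqNorm (partialResidual x Ψ β j k - Ψ j k *ᵥ u)
          + sqNorm (partialResidual x Ψ β k j - Ψ k j *ᵥ v))
        + lam * √(sqNorm (Ψ j k *ᵥ u) + sqNorm (Ψ k j *ᵥ v)) := by
  wlog hlt : j < k generalizing j k
  · obtain ⟨C, hC⟩ := this hjk.symm (lt_of_le_of_ne (not_lt.1 hlt) hjk.symm)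
    exact ⟨C, fun u v => by
      rw [updPair_comm β hjk, hC v u, add_comm (sqNorm (Ψ k j *ᵥ v)),
        add_comm (sqNorm (partialResidual x Ψ β k j - Ψ k j *ᵥ v))]⟩
  refine ⟨1 / (2 * (n : ℝ)) *
      ∑ a ∈ (Finset.univ.erase j).erase k, sqNorm (blockResidual x Ψ β a)
    + lam * ∑ p ∈ (Finset.univ.filter (fun p : Fin d × Fin d => p.1 < p.2)).erase (j, k),
      pairPenalty Ψ β p.1 p.2, fun u v => ?_⟩
  rw [spaceJamObj_eq, sum_sqNorm_blockResidual_updPair x Ψ β hjk,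
    sum_pairPenalty_updPair Ψ β hlt]
  ring

lemma sqrt_sqNorm_mulVec_add (hn : 0 < n)
    (horth : ∀ a b : Fin d, a ≠ b → (1 / (n : ℝ)) • ((Ψ a b)ᵀ * Ψ a b) = 1) (hjk : j ≠ k)
    (u v : Fin r → ℝ) :
    √(sqNorm (Ψ j k *ᵥ u) + sqNorm (Ψ k j *ᵥ v)) = √n * ‖pairVec u v‖ := by
  rw [sqNorm_mulVec_of_gram_eq _ (gram_eq_of_orthonormal _ hn (horth j k hjk)),
    sqNorm_mulVec_of_gram_eq _ (gram_eq_of_orthonormal _ hn (horth k j hjk.symm)), ← mul_add,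
    Real.sqrt_mul (Nat.cast_nonneg n), norm_pairVec]

lemma spaceJamObj_updPair_eq_prox (hn : 0 < n) (lam : ℝ)
    (horth : ∀ a b : Fin d, a ≠ b → (1 / (n : ℝ)) • ((Ψ a b)ᵀ * Ψ a b) = 1) (hjk : j ≠ k)
    {bjk bkj : Fin r → ℝ} (hbjk : bjk = leastSquaresFit (Ψ j k) (partialResidual x Ψ β j k))
    (hbkj : bkj = leastSquaresFit (Ψ k j) (partialResidual x Ψ β k j)) :
    ∃ C, ∀ u v, spaceJamObj n r d lam x Ψ (updPair β j k u v)
      = C + (1 / 2 * ‖pairVec bjk bkj - pairVec u v‖ ^ 2 + √n * lam * ‖pairVec u v‖) := by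
  subst hbjk hbkj
  obtain ⟨C, hC⟩ := spaceJamObj_updPair x Ψ β lam hjk
  refine ⟨C + 1 / (2 * (n : ℝ)) *
    (sqNorm (partialResidual x Ψ β j k
        - Ψ j k *ᵥ leastSquaresFit (Ψ j k) (partialResidual x Ψ β j k))
      + sqNorm (partialResidual x Ψ β k j
        - Ψ k j *ᵥ leastSquaresFit (Ψ k j) (partialResidual x Ψ β k j))), fun u v => ?_⟩
  rw [hC, sqNorm_sub_mulVec_of_orthonormal _ hn (horth j k hjk),
    sqNorm_sub_mulVec_of_orthonormal _ hn (horth k j hjk.symm),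
    sqrt_sqNorm_mulVec_add Ψ hn horth hjk, pairVec_sub, norm_pairVec_sq]
  field_simp
  ring

end Blocks

/-- **Group soft-thresholding is the exact block-coordinate update.**
Fix all blocks except (β_{jk}, β_{kj}).  With partial residuals r_{jk}, r_{kj},
least-squares fits b_{jk} = (Ψ_{jk}ᵀΨ_{jk})⁻¹Ψ_{jk}ᵀr_{jk},
b_{kj} = (Ψ_{kj}ᵀΨ_{kj})⁻¹Ψ_{kj}ᵀr_{kj}: if (b_{jk},b_{kj}) ≠ (0,0) the unique
minimizer of F over the pair of blocks is
(1 − nλ/(‖Ψ_{jk}b_{jk}‖₂² + ‖Ψ_{kj}b_{kj}‖₂²)^{1/2})₊ · (b_{jk}, b_{kj});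
if (b_{jk},b_{kj}) = (0,0), the unique minimizer is (0,0). -/
theorem spaceJam_block_update
    (n r d : ℕ) (hn : 0 < n) (lam : ℝ) (hlam : 0 < lam)
    (x : Fin d → Fin n → ℝ)
    (Ψ : Fin d → Fin d → Matrix (Fin n) (Fin r) ℝ)
    (horth : ∀ a b : Fin d, a ≠ b → (1 / (n : ℝ)) • ((Ψ a b)ᵀ * Ψ a b) = 1)
    (β : Fin d → Fin d → Fin r → ℝ) (j k : Fin d) (hjk : j ≠ k)
    (rjk rkj : Fin n → ℝ)
    (hrjk : rjk = fun i =>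
      x j i - ∑ l ∈ Finset.univ.filter (fun l => l ≠ j ∧ l ≠ k),
        (Ψ j l).mulVec (β j l) i)
    (hrkj : rkj = fun i =>
      x k i - ∑ l ∈ Finset.univ.filter (fun l => l ≠ k ∧ l ≠ j),
        (Ψ k l).mulVec (β k l) i)
    (bjk bkj : Fin r → ℝ)
    (hbjk : bjk = (((Ψ j k)ᵀ * Ψ j k)⁻¹).mulVec ((Ψ j k)ᵀ.mulVec rjk))
    (hbkj : bkj = (((Ψ k j)ᵀ * Ψ k j)⁻¹).mulVec ((Ψ k j)ᵀ.mulVec rkj))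
    (c : ℝ)
    (hc : c = max (1 - (n : ℝ) * lam / Real.sqrt (sqNorm ((Ψ j k).mulVec bjk)
        + sqNorm ((Ψ k j).mulVec bkj))) 0) :
    ((¬(bjk = 0 ∧ bkj = 0)) →
      (∀ u v : Fin r → ℝ,
          spaceJamObj n r d lam x Ψ (updPair β j k (c • bjk) (c • bkj))
            ≤ spaceJamObj n r d lam x Ψ (updPair β j k u v))
      ∧ ∀ u v : Fin r → ℝ,
          spaceJamObj n r d lam x Ψ (updPair β j k u v)
            ≤ spaceJamObj n r d lam x Ψ (updPair β j k (c • bjk) (c • bkj)) →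
          u = c • bjk ∧ v = c • bkj)
    ∧ ((bjk = 0 ∧ bkj = 0) →
      (∀ u v : Fin r → ℝ,
          spaceJamObj n r d lam x Ψ (updPair β j k 0 0)
            ≤ spaceJamObj n r d lam x Ψ (updPair β j k u v))
      ∧ ∀ u v : Fin r → ℝ,
          spaceJamObj n r d lam x Ψ (updPair β j k u v)
            ≤ spaceJamObj n r d lam x Ψ (updPair β j k 0 0) →
          u = 0 ∧ v = 0) := by
  have hμ : 0 ≤ √n * lam := by positivity
  subst hrjk hrkj
  obtain ⟨C, hC⟩ := spaceJamObj_updPair_eq_prox x Ψ β hn lam horth hjk hbjk hbkj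
  have hthreshold : c • pairVec bjk bkj = groupSoftThreshold (√n * lam) (pairVec bjk bkj) := by
    have hscale : (n : ℝ) * lam / (√n * ‖pairVec bjk bkj‖) = √n * lam / ‖pairVec bjk bkj‖ := by
      rw [div_mul_eq_div_div, mul_div_right_comm, Real.div_sqrt]
    rw [groupSoftThreshold, hc, sqrt_sqNorm_mulVec_add Ψ hn horth hjk, hscale]
  have hmin : ∀ u v, spaceJamObj n r d lam x Ψ (updPair β j k (c • bjk) (c • bkj))
      ≤ spaceJamObj n r d lam x Ψ (updPair β j k u v) := fun u v => by
    rw [hC, hC, ← smul_pairVec, hthreshold]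
    linarith [groupSoftThreshold_le hμ (pairVec bjk bkj) (pairVec u v)]
  have huniq : ∀ u v, spaceJamObj n r d lam x Ψ (updPair β j k u v)
      ≤ spaceJamObj n r d lam x Ψ (updPair β j k (c • bjk) (c • bkj))
      → u = c • bjk ∧ v = c • bkj := fun u v h => by
    rw [hC, hC, ← smul_pairVec, hthreshold] at h
    apply pairVec_injective
    rw [← smul_pairVec, hthreshold]
    exact eq_groupSoftThreshold_of_le hμ (le_of_add_le_add_left h)
  refine ⟨fun _ => ⟨hmin, huniq⟩, fun ⟨hjk0, hkj0⟩ => ?_⟩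
  simp only [hjk0, hkj0, smul_zero] at hmin huniq
  exact ⟨hmin, huniq⟩
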